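/- For s ∈ ℂ, define f_s : ℍ → ℂ by f_s(z) = (Im z / |z|)^{s}, where |z| is the complex modulus. Then f_s is smooth on ℍ, and for every z = x + iy ∈ ℍ one has −y² (∂²f_s/∂x² (z) + ∂²f_s/∂y² (z)) − s(1−s) f_s(z) = s² f_{s+2}(z). (In other words, each term sin(θ(z))^s of the hyperbolic Eisenstein series satisfies (Δ_hyp − s(1−s)) sin θ^s = s² sin θ^{s+2}, where Δ_hyp = −y²(∂²/∂x² + ∂²/∂y²) is the hyperbolic Laplacian and sin θ(z) = Im z/|z|.) -/

import Mathlib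

open Complex Real

noncomputable def fHyp (s : ℂ) (z : ℂ) : ℂ :=
  ((z.im / ‖z‖ : ℝ) : ℂ) ^ s

noncomputable def Fh (s : ℂ) (x y : ℝ) : ℂ :=
  Complex.exp (s * ((Real.log y - Real.log (x ^ 2 + y ^ 2) / 2 : ℝ) : ℂ))

lemma fHyp_eq (s : ℂ) (x : ℝ) {y : ℝ} (hy : 0 < y) :
    fHyp s ((x : ℂ) + (y : ℂ) * Complex.I) = Fh s x y := by
  have hr2 : (0:ℝ) < x ^ 2 + y ^ 2 := by positivity
  have him : ((x : ℂ) + (y : ℂ) * Complex.I).im = y := by simp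
  have habs : ‖(x : ℂ) + (y : ℂ) * Complex.I‖ = Real.sqrt (x ^ 2 + y ^ 2) := by
    rw [Complex.norm_def, Complex.normSq_add_mul_I]
  have hq : (0:ℝ) < y / Real.sqrt (x ^ 2 + y ^ 2) := by positivity
  rw [fHyp, him, habs, Complex.cpow_def_of_ne_zero (by exact_mod_cast hq.ne')]
  rw [← Complex.ofReal_log hq.le, Real.log_div hy.ne' (by positivity),
    Real.log_sqrt hr2.le, Fh, mul_comm]

lemma hasDerivAt_exp_ofReal (s : ℂ) {A : ℝ → ℝ} {a t : ℝ} (h : HasDerivAt A a t) :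
    HasDerivAt (fun u => Complex.exp (s * ((A u : ℝ) : ℂ)))
      (s * (a : ℂ) * Complex.exp (s * ((A t : ℝ) : ℂ))) t := by
  have := (h.ofReal_comp.const_mul s).cexp
  convert this using 1
  ring

/-- derivative in x -/
lemma hx1 (s : ℂ) {y : ℝ} (hy : 0 < y) (x : ℝ) :
    HasDerivAt (fun x' => Fh s x' y)
      (s * ((-x / (x ^ 2 + y ^ 2) : ℝ) : ℂ) * Fh s x y) x := by
  have hr2 : (0:ℝ) < x ^ 2 + y ^ 2 := by positivity
  have hpoly : HasDerivAt (fun x' : ℝ => x' ^ 2 + y ^ 2) (2 * x) x := by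
    simpa using (hasDerivAt_pow 2 x).add_const (y ^ 2)
  have hlog : HasDerivAt (fun x' : ℝ => Real.log (x' ^ 2 + y ^ 2))
      ((x ^ 2 + y ^ 2)⁻¹ * (2 * x)) x := by
    exact (Real.hasDerivAt_log hr2.ne').comp x hpoly
  have hA : HasDerivAt (fun x' : ℝ => Real.log y - Real.log (x' ^ 2 + y ^ 2) / 2)
      (-x / (x ^ 2 + y ^ 2)) x := by
    have := (hlog.div_const 2).const_sub (Real.log y)
    refine this.congr_deriv ?_
    field_simp
  exact hasDerivAt_exp_ofReal s hA

/-- derivative in y -/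
lemma hy1 (s : ℂ) (x : ℝ) {y : ℝ} (hy : 0 < y) :
    HasDerivAt (fun y' => Fh s x y')
      (s * ((1 / y - y / (x ^ 2 + y ^ 2) : ℝ) : ℂ) * Fh s x y) y := by
  have hr2 : (0:ℝ) < x ^ 2 + y ^ 2 := by positivity
  have hpoly : HasDerivAt (fun y' : ℝ => x ^ 2 + y' ^ 2) (2 * y) y := by
    simpa using (hasDerivAt_pow 2 y).const_add (x ^ 2)
  have hlog : HasDerivAt (fun y' : ℝ => Real.log (x ^ 2 + y' ^ 2))
      ((x ^ 2 + y ^ 2)⁻¹ * (2 * y)) y := by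
    exact (Real.hasDerivAt_log hr2.ne').comp y hpoly
  have hA : HasDerivAt (fun y' : ℝ => Real.log y' - Real.log (x ^ 2 + y' ^ 2) / 2)
      (1 / y - y / (x ^ 2 + y ^ 2)) y := by
    have := (Real.hasDerivAt_log hy.ne').sub (hlog.div_const 2)
    refine this.congr_deriv ?_
    field_simp
  exact hasDerivAt_exp_ofReal s hA

/-- second derivative in x -/
lemma hx2 (s : ℂ) {y : ℝ} (hy : 0 < y) (x : ℝ) :
    HasDerivAt (fun x' => s * ((-x' / (x' ^ 2 + y ^ 2) : ℝ) : ℂ) * Fh s x' y)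
      (s * (((x ^ 2 - y ^ 2) / (x ^ 2 + y ^ 2) ^ 2 : ℝ) : ℂ) * Fh s x y
        + s * ((-x / (x ^ 2 + y ^ 2) : ℝ) : ℂ)
          * (s * ((-x / (x ^ 2 + y ^ 2) : ℝ) : ℂ) * Fh s x y)) x := by
  have hr2 : (0:ℝ) < x ^ 2 + y ^ 2 := by positivity
  have hpoly : HasDerivAt (fun x' : ℝ => x' ^ 2 + y ^ 2) (2 * x) x := by
    simpa using (hasDerivAt_pow 2 x).add_const (y ^ 2)
  have hB : HasDerivAt (fun x' : ℝ => -x' / (x' ^ 2 + y ^ 2))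
      ((x ^ 2 - y ^ 2) / (x ^ 2 + y ^ 2) ^ 2) x := by
    have := (hasDerivAt_id x).neg.div hpoly hr2.ne'
    refine this.congr_deriv ?_
    field_simp
    simp only [Pi.neg_apply, id_eq]
    ring
  exact ((hB.ofReal_comp.const_mul s).mul (hx1 s hy x))

/-- second derivative in y -/
lemma hy2 (s : ℂ) (x : ℝ) {y : ℝ} (hy : 0 < y) :
    HasDerivAt (fun y' => s * ((1 / y' - y' / (x ^ 2 + y' ^ 2) : ℝ) : ℂ) * Fh s x y')
      (s * ((-(1 / y ^ 2) - (x ^ 2 - y ^ 2) / (x ^ 2 + y ^ 2) ^ 2 : ℝ) : ℂ) * Fh s x y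
        + s * ((1 / y - y / (x ^ 2 + y ^ 2) : ℝ) : ℂ)
          * (s * ((1 / y - y / (x ^ 2 + y ^ 2) : ℝ) : ℂ) * Fh s x y)) y := by
  have hr2 : (0:ℝ) < x ^ 2 + y ^ 2 := by positivity
  have hpoly : HasDerivAt (fun y' : ℝ => x ^ 2 + y' ^ 2) (2 * y) y := by
    simpa using (hasDerivAt_pow 2 y).const_add (x ^ 2)
  have hC : HasDerivAt (fun y' : ℝ => 1 / y' - y' / (x ^ 2 + y' ^ 2))
      (-(1 / y ^ 2) - (x ^ 2 - y ^ 2) / (x ^ 2 + y ^ 2) ^ 2) y := by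
    have h1 : HasDerivAt (fun y' : ℝ => 1 / y') (-(y ^ 2)⁻¹) y := by
      simpa [one_div] using hasDerivAt_inv hy.ne'
    have h2 := (hasDerivAt_id y).div hpoly hr2.ne'
    have := h1.sub h2
    refine this.congr_deriv ?_
    field_simp
    simp only [Pi.neg_apply, id_eq]
    ring
  exact ((hC.ofReal_comp.const_mul s).mul (hy1 s x hy))

lemma keyId (s xc y r : ℂ) (hy : y ≠ 0) (hr : r ≠ 0) (hrdef : r = xc^2 + y^2) :
    -(y^2) * ((s*((xc^2-y^2)/r^2) + s*(-xc/r)*(s*(-xc/r)))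
      + (s*(-(1/y^2)-(xc^2-y^2)/r^2) + s*(1/y - y/r)*(s*(1/y-y/r)))) - s*(1-s)
    = s^2*(y^2/r) := by
  have h1 : r * r⁻¹ = 1 := mul_inv_cancel₀ hr
  have h2 : y * y⁻¹ = 1 := mul_inv_cancel₀ hy
  linear_combination (s*(y*y⁻¹+1) - s^2*(y*y⁻¹+1) + 2*s^2*y^2*r⁻¹) * h2
    + (-(s^2*y^2*r⁻¹)) * h1 + (s^2*y^2*r⁻¹^2) * hrdef

theorem statement16 (s : ℂ) :
    ContDiffOn ℝ (⊤ : ℕ∞) (fHyp s) {z : ℂ | 0 < z.im} ∧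
    ∀ x y : ℝ, 0 < y →
      -(y : ℂ) ^ 2 *
          (deriv (deriv (fun x' : ℝ => fHyp s ((x' : ℂ) + (y : ℂ) * Complex.I))) x +
            deriv (deriv (fun y' : ℝ => fHyp s ((x : ℂ) + (y' : ℂ) * Complex.I))) y) -
        s * (1 - s) * fHyp s ((x : ℂ) + (y : ℂ) * Complex.I)
      = s ^ 2 * fHyp (s + 2) ((x : ℂ) + (y : ℂ) * Complex.I) := by
  constructor
  · -- smoothness
    apply ContDiffOn.congr (f := fun z : ℂ =>
      Complex.exp (s * ((Real.log z.im - Real.log (z.re ^ 2 + z.im ^ 2) / 2 : ℝ) : ℂ)))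
    · intro z hz
      have hz' : (0:ℝ) < z.im := hz
      have h1 : z.im ≠ 0 := hz'.ne'
      have h2 : z.re ^ 2 + z.im ^ 2 ≠ 0 := by positivity
      apply ContDiffAt.contDiffWithinAt
      have hA : ContDiffAt ℝ (⊤ : ℕ∞) (fun z : ℂ => Real.log z.im) z :=
        (Real.contDiffAt_log.2 h1).comp z Complex.imCLM.contDiff.contDiffAt
      have hB : ContDiffAt ℝ (⊤ : ℕ∞) (fun z : ℂ => Real.log (z.re ^ 2 + z.im ^ 2)) z :=
        (Real.contDiffAt_log.2 h2).comp z
          (((Complex.reCLM.contDiff.pow 2).add (Complex.imCLM.contDiff.pow 2)).contDiffAt)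
      have hC : ContDiffAt ℝ (⊤ : ℕ∞)
          (fun z : ℂ => ((Real.log z.im - Real.log (z.re ^ 2 + z.im ^ 2) / 2 : ℝ) : ℂ)) z :=
        Complex.ofRealCLM.contDiff.contDiffAt.comp z (hA.sub (hB.div_const 2))
      exact Complex.contDiff_exp.contDiffAt.comp z (contDiffAt_const.mul hC)
    · intro z hz
      have hz' : (0:ℝ) < z.im := hz
      conv_lhs => rw [← Complex.re_add_im z]
      rw [fHyp_eq s z.re hz']
      rfl
  · intro x y hy
    have hr2 : (0:ℝ) < x ^ 2 + y ^ 2 := by positivity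
    -- x second derivative
    have hfx : (fun x' : ℝ => fHyp s ((x' : ℂ) + (y : ℂ) * Complex.I))
        = fun x' => Fh s x' y := funext fun x' => fHyp_eq s x' hy
    have hdx : deriv (fun x' => Fh s x' y)
        = fun x' => s * ((-x' / (x' ^ 2 + y ^ 2) : ℝ) : ℂ) * Fh s x' y :=
      funext fun x' => (hx1 s hy x').deriv
    have hddx : deriv (deriv (fun x' : ℝ => fHyp s ((x' : ℂ) + (y : ℂ) * Complex.I))) x
        = s * (((x ^ 2 - y ^ 2) / (x ^ 2 + y ^ 2) ^ 2 : ℝ) : ℂ) * Fh s x y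
          + s * ((-x / (x ^ 2 + y ^ 2) : ℝ) : ℂ)
            * (s * ((-x / (x ^ 2 + y ^ 2) : ℝ) : ℂ) * Fh s x y) := by
      rw [hfx, hdx]
      exact (hx2 s hy x).deriv
    -- y second derivative
    have hmem : Set.Ioi (0:ℝ) ∈ nhds y := Ioi_mem_nhds hy
    have hev : (fun y' : ℝ => fHyp s ((x : ℂ) + (y' : ℂ) * Complex.I))
        =ᶠ[nhds y] fun y' => Fh s x y' :=
      Filter.eventually_of_mem hmem fun y' hy' => fHyp_eq s x hy'
    have hev2 : deriv (fun y' => Fh s x y')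
        =ᶠ[nhds y] fun y' => s * ((1 / y' - y' / (x ^ 2 + y' ^ 2) : ℝ) : ℂ) * Fh s x y' :=
      Filter.eventually_of_mem hmem fun y' hy' => (hy1 s x hy').deriv
    have hev3 : deriv (fun y' : ℝ => fHyp s ((x : ℂ) + (y' : ℂ) * Complex.I))
        =ᶠ[nhds y] fun y' => s * ((1 / y' - y' / (x ^ 2 + y' ^ 2) : ℝ) : ℂ) * Fh s x y' :=
      hev.deriv.trans hev2
    have hddy : deriv (deriv (fun y' : ℝ => fHyp s ((x : ℂ) + (y' : ℂ) * Complex.I))) y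
        = s * ((-(1 / y ^ 2) - (x ^ 2 - y ^ 2) / (x ^ 2 + y ^ 2) ^ 2 : ℝ) : ℂ) * Fh s x y
          + s * ((1 / y - y / (x ^ 2 + y ^ 2) : ℝ) : ℂ)
            * (s * ((1 / y - y / (x ^ 2 + y ^ 2) : ℝ) : ℂ) * Fh s x y) := by
      rw [hev3.deriv_eq]
      exact (hy2 s x hy).deriv
    -- rewrite fHyp terms
    have hF : fHyp s ((x : ℂ) + (y : ℂ) * Complex.I) = Fh s x y := fHyp_eq s x hy
    have hFs2 : fHyp (s + 2) ((x : ℂ) + (y : ℂ) * Complex.I)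
        = Fh s x y * ((y ^ 2 / (x ^ 2 + y ^ 2) : ℝ) : ℂ) := by
      rw [fHyp_eq (s + 2) x hy, Fh, Fh, add_mul, Complex.exp_add]
      congr 1
      have h2A : 2 * (Real.log y - Real.log (x ^ 2 + y ^ 2) / 2)
          = Real.log (y ^ 2 / (x ^ 2 + y ^ 2)) := by
        rw [Real.log_div (by positivity) hr2.ne', Real.log_pow]
        push_cast; ring
      calc Complex.exp (2 * ((Real.log y - Real.log (x ^ 2 + y ^ 2) / 2 : ℝ) : ℂ))
          = Complex.exp (((2 * (Real.log y - Real.log (x ^ 2 + y ^ 2) / 2) : ℝ) : ℂ)) := by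
            push_cast; ring_nf
        _ = ((Real.exp (Real.log (y ^ 2 / (x ^ 2 + y ^ 2))) : ℝ) : ℂ) := by
            rw [h2A, Complex.ofReal_exp]
        _ = ((y ^ 2 / (x ^ 2 + y ^ 2) : ℝ) : ℂ) := by
            rw [Real.exp_log (by positivity)]
    rw [hddx, hddy, hF, hFs2]
    have hyc : ((y : ℝ) : ℂ) ≠ 0 := by exact_mod_cast hy.ne'
    have hrc : ((x : ℂ) ^ 2 + (y : ℂ) ^ 2) ≠ 0 := by
      have : (((x ^ 2 + y ^ 2 : ℝ)) : ℂ) ≠ 0 := by exact_mod_cast hr2.ne'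
      push_cast at this; exact this
    push_cast
    have key := keyId s (x:ℂ) (y:ℂ) ((x:ℂ)^2+(y:ℂ)^2) hyc hrc rfl
    linear_combination Fh s x y * key
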